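/- Let y_1, …, y_M ∈ ℝ^a with ‖y_t‖ ≤ B_Y for all t ∈ [M], arranged as rows of Y ∈ ℝ^{M×a}, let q ∈ ℝ^d, let β > 0, and let W_K, W_K' ∈ ℝ^{a×d} and W_V, W_V' ∈ ℝ^{a×d} with the operator norm bound ‖W_Vᵀ‖₂ ≤ B_V. Define f(W_K, W_V) := W_Vᵀ Yᵀ Softmax₁(β Y W_K q) ∈ ℝ^d. Then ‖f(W_K, W_V) − f(W_K', W_V')‖ ≤ 2 B_V B_Y · max_{t ∈ [M]} |β⟨y_t, (W_K − W_K') q⟩| + max_{t ∈ [M]} ‖(W_V − W_V')ᵀ y_t‖, where ‖·‖ denotes the Euclidean norm on vectors. -/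

import Mathlib

/-!
Write `f(W_K, W_V) - f(W_K', W_V')` as a change of the attention weights with the values
`W_Vᵀ y_t` fixed, plus a change of the values with the weights fixed. Softmax₁ weights are
nonnegative with total mass at most one, which bounds the second part by `max_t ‖(W_V - W_V')ᵀ y_t‖`.
For the first part, along the segment `z' + s (z - z')` between the two logit vectors the weights
`p` move with velocity `p_ν (δ_ν - ∑_μ p_μ δ_μ)`, where `|δ_ν| ≤ ε`; this is at most `2 ε` per unit
of weight, and the mean value inequality gives `2 ε B_V B_Y`.
-/

open Real
open scoped BigOperators RealInnerProductSpace

noncomputable def softmax1 {M : ℕ} (z : Fin M → ℝ) : Fin M → ℝ :=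
  fun ν => Real.exp (z ν) / (1 + ∑ μ, Real.exp (z μ))

lemma softmax1_denom_pos {M : ℕ} (z : Fin M → ℝ) : 0 < 1 + ∑ μ, exp (z μ) := by
  positivity

lemma softmax1_nonneg {M : ℕ} (z : Fin M → ℝ) (ν : Fin M) : 0 ≤ softmax1 z ν := by
  unfold softmax1; positivity

lemma sum_softmax1_le_one {M : ℕ} (z : Fin M → ℝ) : ∑ ν, softmax1 z ν ≤ 1 := by
  simp only [softmax1, ← Finset.sum_div]
  rw [div_le_one (softmax1_denom_pos z)]
  exact le_add_of_nonneg_left zero_le_one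

lemma norm_sum_smul_le_of_sum_le_one {ι E : Type*} [Fintype ι] [SeminormedAddCommGroup E]
    [NormedSpace ℝ E] {p : ι → ℝ} {v : ι → E} {B : ℝ} (hp : ∀ i, 0 ≤ p i)
    (hp_sum : ∑ i, p i ≤ 1) (hB : 0 ≤ B) (hv : ∀ i, ‖v i‖ ≤ B) :
    ‖∑ i, p i • v i‖ ≤ B :=
  calc ‖∑ i, p i • v i‖ ≤ ∑ i, p i * B := by
        refine (norm_sum_le _ _).trans (Finset.sum_le_sum fun i _ => ?_)
        rw [norm_smul, Real.norm_of_nonneg (hp i)]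
        exact mul_le_mul_of_nonneg_left (hv i) (hp i)
    _ = (∑ i, p i) * B := (Finset.sum_mul ..).symm
    _ ≤ B := mul_le_of_le_one_left hB hp_sum

lemma hasDerivAt_softmax1_line {M : ℕ} (z δ : Fin M → ℝ) (ν : Fin M) (s : ℝ) :
    HasDerivAt (fun s => softmax1 (fun μ => z μ + s * δ μ) ν)
      (softmax1 (fun μ => z μ + s * δ μ) ν *
        (δ ν - ∑ μ, softmax1 (fun μ => z μ + s * δ μ) μ * δ μ)) s := by
  have hexp : ∀ μ, HasDerivAt (fun s => exp (z μ + s * δ μ)) (exp (z μ + s * δ μ) * δ μ) s :=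
    fun μ => by simpa using (((hasDerivAt_id s).mul_const (δ μ)).const_add (z μ)).exp
  have hD_pos := softmax1_denom_pos (fun μ => z μ + s * δ μ)
  have hD := (HasDerivAt.fun_sum (u := Finset.univ) fun μ _ => hexp μ).const_add 1
  refine ((hexp ν).fun_div hD hD_pos.ne').congr_deriv ?_
  simp only [softmax1, div_mul_eq_mul_div, ← Finset.sum_div]
  field_simp

lemma norm_sum_softmax1_smul_sub_le {M : ℕ} (hM : 0 < M) {E : Type*} [NormedAddCommGroup E]
    [NormedSpace ℝ E] {z z' : Fin M → ℝ} {v : Fin M → E} {ε B : ℝ}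
    (hε : ∀ t, |z t - z' t| ≤ ε) (hv : ∀ t, ‖v t‖ ≤ B) :
    ‖∑ t, softmax1 z t • v t - ∑ t, softmax1 z' t • v t‖ ≤ 2 * ε * B := by
  have hB : 0 ≤ B := (norm_nonneg _).trans (hv ⟨0, hM⟩)
  have hε₀ : 0 ≤ ε := (abs_nonneg _).trans (hε ⟨0, hM⟩)
  set δ : Fin M → ℝ := fun t => z t - z' t
  set p : ℝ → Fin M → ℝ := fun s => softmax1 (fun μ => z' μ + s * δ μ)
  have hderiv : ∀ s, HasDerivAt (fun s => ∑ t, p s t • v t)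
      (∑ t, (p s t * (δ t - ∑ μ, p s μ * δ μ)) • v t) s :=
    fun s => HasDerivAt.fun_sum fun t _ => (hasDerivAt_softmax1_line z' δ t s).smul_const (v t)
  have hderiv_le : ∀ s, ‖∑ t, (p s t * (δ t - ∑ μ, p s μ * δ μ)) • v t‖ ≤ 2 * ε * B := by
    intro s
    have hmean : ‖∑ μ, p s μ • δ μ‖ ≤ ε :=
      norm_sum_smul_le_of_sum_le_one (softmax1_nonneg _) (sum_softmax1_le_one _) hε₀ hε
    simp only [mul_smul, smul_eq_mul] at hmean ⊢
    refine norm_sum_smul_le_of_sum_le_one (softmax1_nonneg _) (sum_softmax1_le_one _)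
      (by positivity) fun t => ?_
    rw [norm_smul, two_mul]
    exact mul_le_mul (norm_sub_le_of_le (hε t) hmean) (hv t) (norm_nonneg _) (by positivity)
  simpa [p, δ] using norm_image_sub_le_of_norm_deriv_le_segment_01'
    (fun s _ => (hderiv s).hasDerivWithinAt) (fun s _ => hderiv_le s)

theorem stmt17_general (a d M : ℕ) (hM : 0 < M) (β : ℝ)
    (y : Fin M → EuclideanSpace ℝ (Fin a)) (B_Y B_V : ℝ)
    (hy : ∀ t, ‖y t‖ ≤ B_Y)
    (q : EuclideanSpace ℝ (Fin d))
    (WK WK' WV WV' : EuclideanSpace ℝ (Fin d) →L[ℝ] EuclideanSpace ℝ (Fin a))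
    (hWV : ‖ContinuousLinearMap.adjoint WV‖ ≤ B_V)
    (f : (EuclideanSpace ℝ (Fin d) →L[ℝ] EuclideanSpace ℝ (Fin a)) →
      (EuclideanSpace ℝ (Fin d) →L[ℝ] EuclideanSpace ℝ (Fin a)) →
      EuclideanSpace ℝ (Fin d))
    (hf : ∀ K V, f K V = ∑ t, softmax1 (fun s => β * ⟪y s, K q⟫) t •
      (ContinuousLinearMap.adjoint V) (y t)) :
    ‖f WK WV - f WK' WV'‖ ≤
      2 * B_V * B_Y *
        Finset.univ.sup' (Finset.univ_nonempty_iff.mpr ⟨⟨0, hM⟩⟩)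
          (fun t => |β * ⟪y t, (WK - WK') q⟫|) +
      Finset.univ.sup' (Finset.univ_nonempty_iff.mpr ⟨⟨0, hM⟩⟩)
        (fun t => ‖(ContinuousLinearMap.adjoint (WV - WV')) (y t)‖) := by
  set ε := Finset.univ.sup' _ fun t => |β * ⟪y t, (WK - WK') q⟫|
  set η := Finset.univ.sup' _ fun t => ‖(ContinuousLinearMap.adjoint (WV - WV')) (y t)‖
  set z : Fin M → ℝ := fun s => β * ⟪y s, WK q⟫
  set z' : Fin M → ℝ := fun s => β * ⟪y s, WK' q⟫
  set A := ContinuousLinearMap.adjoint WV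
  have hz : ∀ t, |z t - z' t| ≤ ε := fun t => by
    have hzt : z t - z' t = β * ⟪y t, (WK - WK') q⟫ := by
      simp only [z, z', sub_apply, inner_sub_right, mul_sub]
    exact hzt ▸ Finset.le_sup' (fun t => |β * ⟪y t, (WK - WK') q⟫|) (Finset.mem_univ t)
  have hη : ∀ t, ‖ContinuousLinearMap.adjoint (WV - WV') (y t)‖ ≤ η := fun t =>
    Finset.le_sup' (fun t => ‖ContinuousLinearMap.adjoint (WV - WV') (y t)‖) (Finset.mem_univ t)
  have hA : ∀ t, ‖A (y t)‖ ≤ B_V * B_Y := fun t =>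
    (A.le_opNorm _).trans (mul_le_mul hWV (hy t) (norm_nonneg _) ((norm_nonneg _).trans hWV))
  have hsplit : f WK WV - f WK' WV' =
      (∑ t, softmax1 z t • A (y t) - ∑ t, softmax1 z' t • A (y t)) +
        ∑ t, softmax1 z' t • ContinuousLinearMap.adjoint (WV - WV') (y t) := by
    simp only [hf, map_sub, sub_apply, smul_sub, Finset.sum_sub_distrib]
    abel
  calc ‖f WK WV - f WK' WV'‖
      ≤ 2 * ε * (B_V * B_Y) + η := by
        rw [hsplit]
        refine (norm_add_le _ _).trans (add_le_add (norm_sum_softmax1_smul_sub_le hM hz hA) ?_)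
        exact norm_sum_smul_le_of_sum_le_one (softmax1_nonneg _) (sum_softmax1_le_one _)
          ((norm_nonneg _).trans (hη ⟨0, hM⟩)) hη
    _ = _ := by ring

/-- Let `y_1, …, y_M ∈ ℝ^a` with `‖y_t‖ ≤ B_Y` (the rows of `Y`), `q ∈ ℝ^d`, `β > 0`,
and `W_K, W_K', W_V, W_V' ∈ ℝ^{a×d}` (viewed as linear maps `ℝ^d → ℝ^a`) with
`‖W_Vᵀ‖₂ ≤ B_V`. Define `f(W_K, W_V) = W_Vᵀ Yᵀ Softmax₁(β Y W_K q)
= ∑_t [Softmax₁(β Y W_K q)]_t • W_Vᵀ y_t ∈ ℝ^d`. Then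
`‖f(W_K, W_V) − f(W_K', W_V')‖ ≤ 2 B_V B_Y · max_t |β⟨y_t, (W_K − W_K') q⟩|
  + max_t ‖(W_V − W_V')ᵀ y_t‖`. -/
theorem stmt17 (a d M : ℕ) (hM : 0 < M) (β : ℝ) (hβ : 0 < β)
    (y : Fin M → EuclideanSpace ℝ (Fin a)) (B_Y B_V : ℝ)
    (hy : ∀ t, ‖y t‖ ≤ B_Y)
    (q : EuclideanSpace ℝ (Fin d))
    (WK WK' WV WV' : EuclideanSpace ℝ (Fin d) →L[ℝ] EuclideanSpace ℝ (Fin a))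
    (hWV : ‖ContinuousLinearMap.adjoint WV‖ ≤ B_V)
    (f : (EuclideanSpace ℝ (Fin d) →L[ℝ] EuclideanSpace ℝ (Fin a)) →
      (EuclideanSpace ℝ (Fin d) →L[ℝ] EuclideanSpace ℝ (Fin a)) →
      EuclideanSpace ℝ (Fin d))
    (hf : ∀ K V, f K V = ∑ t, softmax1 (fun s => β * ⟪y s, K q⟫) t •
      (ContinuousLinearMap.adjoint V) (y t)) :
    ‖f WK WV - f WK' WV'‖ ≤
      2 * B_V * B_Y *
        Finset.univ.sup' (Finset.univ_nonempty_iff.mpr ⟨⟨0, hM⟩⟩)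
          (fun t => |β * ⟪y t, (WK - WK') q⟫|) +
      Finset.univ.sup' (Finset.univ_nonempty_iff.mpr ⟨⟨0, hM⟩⟩)
        (fun t => ‖(ContinuousLinearMap.adjoint (WV - WV')) (y t)‖) :=
  stmt17_general a d M hM β y B_Y B_V hy q WK WK' WV WV' hWV f hf
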